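/- arXiv:2106.07371 — 8 statements merged into one kernel-verified Lean document; each statement's English description precedes it below -/
import Mathlib

section
/- For the constant product AMM with fee, the price function p_{X→Y}(x, y, δ_x) = (y - x·y/(x + 0.997·δ_x))/δ_x is strictly decreasing in δ_x for δ_x > 0 (liquidity sensitivity). -/
/-- Liquidity sensitivity: the average exchange rate of a constant product AMM
with 0.3% fee is strictly decreasing in the trade size. -/
theorem cpamm_price_strictAntiOn (x y : ℝ) (hx : 0 < x) (hy : 0 < y) :
    StrictAntiOn (fun δ : ℝ => (y - x * y / (x + 0.997 * δ)) / δ) (Set.Ioi 0) := by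
  have key : ∀ δ : ℝ, 0 < δ →
      (y - x * y / (x + 0.997 * δ)) / δ = 0.997 * y / (x + 0.997 * δ) := by
    intro δ hδ
    have hden : x + 0.997 * δ ≠ 0 := by positivity
    field_simp
    ring
  intro a ha b hb hab
  simp only [Set.mem_Ioi] at ha hb
  simp only [key a ha, key b hb]
  apply div_lt_div_of_pos_left (by positivity) (by positivity)
  linarith
end

section
/- With a 0.3% fee, the constant product of reserves is non-decreasing after a swap: if δ_y = y - x·y/(x + 0.997·δ_x) with δ_x > 0, then (x + δ_x)·(y - δ_y) ≥ x·y, with strict inequality. -/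
/-- With a 0.3% fee, the constant product of reserves strictly increases after a swap. -/
theorem cpamm_invariant_increases_with_fee (x y δx δy : ℝ) (hx : 0 < x) (hy : 0 < y)
    (hδx : 0 < δx) (hδy : δy = y - x * y / (x + 0.997 * δx)) :
    x * y < (x + δx) * (y - δy) := by
  subst hδy
  have h : 0 < x + 0.997 * δx := by nlinarith
  rw [show y - (y - x * y / (x + 0.997 * δx)) = x * y / (x + 0.997 * δx) by ring,
    ← mul_div_assoc, lt_div_iff₀ h]
  nlinarith [mul_pos (mul_pos hx hy) hδx]
end

section
/- Optimal routing of a trade δ_x across two fee-less constant product AMMs with states (x₁, y₁), (x₂, y₂) and equal prices y₁/x₁ = y₂/x₂ = p: among all splits δ_x = δ_{x1} + δ_{x2} with δ_{x1}, δ_{x2} ≥ 0, the total output δ_{y1} + δ_{y2} is maximized by the proportional split δ_{x1} = δ_x·x₁/(x₁+x₂), δ_{x2} = δ_x·x₂/(x₁+x₂). -/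
/-- Optimal routing across two price-synchronized fee-less constant product AMMs:
the proportional split maximizes the total output. -/
theorem cpamm_proportional_split_optimal
    (x₁ y₁ x₂ y₂ δx : ℝ) (hx₁ : 0 < x₁) (hy₁ : 0 < y₁) (hx₂ : 0 < x₂) (hy₂ : 0 < y₂)
    (hδx : 0 < δx) (hsync : y₁ / x₁ = y₂ / x₂) :
    ∀ δx1 δx2 : ℝ, 0 ≤ δx1 → 0 ≤ δx2 → δx1 + δx2 = δx →
      y₁ * δx1 / (x₁ + δx1) + y₂ * δx2 / (x₂ + δx2) ≤
      y₁ * (δx * x₁ / (x₁ + x₂)) / (x₁ + δx * x₁ / (x₁ + x₂)) +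
      y₂ * (δx * x₂ / (x₁ + x₂)) / (x₂ + δx * x₂ / (x₁ + x₂)) := by
  intro δx1 δx2 h1 h2 hsum
  have hp : y₂ = y₁ * x₂ / x₁ := by
    have := div_eq_div_iff (ne_of_gt hx₁) (ne_of_gt hx₂) |>.mp hsync
    field_simp
    linarith
  subst hp
  have hd1 : 0 < x₁ + δx1 := by linarith
  have hd2 : 0 < x₂ + δx2 := by linarith
  have hs : 0 < x₁ + x₂ := by linarith
  have hT : 0 < x₁ + x₂ + δx := by linarith
  have hR1 : y₁ * (δx * x₁ / (x₁ + x₂)) / (x₁ + δx * x₁ / (x₁ + x₂)) =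
      y₁ * δx / (x₁ + x₂ + δx) := by
    rw [div_eq_div_iff (by positivity) (by positivity)]
    field_simp
  have hR2 : y₁ * x₂ / x₁ * (δx * x₂ / (x₁ + x₂)) / (x₂ + δx * x₂ / (x₁ + x₂)) =
      y₁ * x₂ * δx / (x₁ * (x₁ + x₂ + δx)) := by
    rw [div_eq_div_iff (by positivity) (by positivity)]
    field_simp
  have hL2 : y₁ * x₂ / x₁ * δx2 / (x₂ + δx2) = y₁ * x₂ * δx2 / (x₁ * (x₂ + δx2)) := by
    rw [div_eq_div_iff (by positivity) (by positivity)]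
    field_simp
  rw [hR1, hR2, hL2, div_add_div _ _ (by positivity) (by positivity),
      div_add_div _ _ (by positivity) (by positivity),
      div_le_div_iff₀ (by positivity) (by positivity)]
  subst hsum
  nlinarith [mul_nonneg (mul_nonneg (mul_nonneg hy₁.le hx₁.le) hT.le)
      (sq_nonneg (x₁ * δx2 - x₂ * δx1))]
end

section
/- Greedy routing dominance: given two fee-less constant product AMMs where, after a candidate split (δ_{x1}, δ_{x2}) of total input δ_x, AMM 2 still offers a strictly better marginal price than AMM 1, there exists Δ > 0 such that the split (δ_{x1} − Δ, δ_{x2} + Δ) yields strictly more total output of asset Y. -/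
/-- Greedy routing dominance: if after a candidate split AMM 2 still offers a
strictly better marginal price than AMM 1, shifting a small amount of volume
from AMM 1 to AMM 2 strictly increases total output. -/
theorem cpamm_greedy_routing_dominance
    (x₁ y₁ x₂ y₂ δx δx1 δx2 : ℝ)
    (hx₁ : 0 < x₁) (hy₁ : 0 < y₁) (hx₂ : 0 < x₂) (hy₂ : 0 < y₂)
    (hδx1 : 0 < δx1) (hδx2 : 0 ≤ δx2) (hsplit : δx1 + δx2 = δx)
    (hprice :
      (x₁ + δx1) * (x₁ * y₁ / (x₁ + δx1)) / (x₁ + δx1) ^ 2 <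
      (x₂ + δx2) * (x₂ * y₂ / (x₂ + δx2)) / (x₂ + δx2) ^ 2) :
    ∃ Δ : ℝ, 0 < Δ ∧ Δ ≤ δx1 ∧
      y₁ * δx1 / (x₁ + δx1) + y₂ * δx2 / (x₂ + δx2) <
      y₁ * (δx1 - Δ) / (x₁ + (δx1 - Δ)) + y₂ * (δx2 + Δ) / (x₂ + (δx2 + Δ)) := by
  have ha : (0:ℝ) < x₁ + δx1 := by positivity
  have hb : (0:ℝ) < x₂ + δx2 := by positivity
  -- simplify the price hypothesis
  have hp : x₁ * y₁ * (x₂ + δx2) ^ 2 < x₂ * y₂ * (x₁ + δx1) ^ 2 := by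
    have h1 : (x₁ + δx1) * (x₁ * y₁ / (x₁ + δx1)) / (x₁ + δx1) ^ 2
        = x₁ * y₁ / (x₁ + δx1) ^ 2 := by field_simp
    have h2 : (x₂ + δx2) * (x₂ * y₂ / (x₂ + δx2)) / (x₂ + δx2) ^ 2
        = x₂ * y₂ / (x₂ + δx2) ^ 2 := by field_simp
    rw [h1, h2, div_lt_div_iff₀ (by positivity) (by positivity)] at hprice
    linarith
  set c := x₂ * y₂ * (x₁ + δx1) + x₁ * y₁ * (x₂ + δx2) with hc_def
  have hc : 0 < c := by positivity
  set e := (x₂ * y₂ * (x₁ + δx1) ^ 2 - x₁ * y₁ * (x₂ + δx2) ^ 2) / (2 * c) with he_def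
  have he : 0 < e := by
    apply div_pos (by linarith) (by positivity)
  refine ⟨min δx1 e, lt_min hδx1 he, min_le_left _ _, ?_⟩
  set Δ := min δx1 e with hΔ_def
  have hΔpos : 0 < Δ := lt_min hδx1 he
  have hΔ1 : Δ ≤ δx1 := min_le_left _ _
  have hΔc : Δ * c < x₂ * y₂ * (x₁ + δx1) ^ 2 - x₁ * y₁ * (x₂ + δx2) ^ 2 := by
    have h : Δ ≤ e := min_le_right _ _
    rw [he_def, le_div_iff₀ (by positivity)] at h
    nlinarith [mul_pos hΔpos hc]
  have haΔ : 0 < x₁ + (δx1 - Δ) := by linarith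
  have hbΔ : 0 < x₂ + (δx2 + Δ) := by linarith
  have key : 0 < Δ * (x₂ * y₂ * (x₁ + δx1) ^ 2 - x₁ * y₁ * (x₂ + δx2) ^ 2 - Δ * c) :=
    mul_pos hΔpos (by linarith)
  rw [hc_def] at key
  rw [div_add_div _ _ (ne_of_gt ha) (ne_of_gt hb),
      div_add_div _ _ (ne_of_gt haΔ) (ne_of_gt hbΔ),
      div_lt_div_iff₀ (by positivity) (by positivity)]
  nlinarith [key, mul_pos ha hb, mul_pos haΔ hbΔ]
end

section
/- Fee-less two-point arbitrage between two constant product AMMs is profitable if and only if the prices differ: the profit function g(δ) = x₂·(y₁·δ/(x₁+δ)) / (y₂ + y₁·δ/(x₁+δ)) − δ satisfies: there exists δ > 0 with g(δ) > 0 if and only if y₁/x₁ > y₂/x₂. -/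
/-!
A fee-less constant product pool with reserves `(x, y)` pays `y δ / (x + δ)` for an input `δ`.
Two such swaps in a row again form a constant product swap, with virtual reserves
`(x₁ y₂ / (y₁ + y₂), x₂ y₁ / (y₁ + y₂))`. A single swap returns more than its input `δ` exactly
when `x + δ < y`, which for some `δ > 0` happens iff `x < y`; for the virtual pool this
is `x₁ y₂ < x₂ y₁`, i.e. `y₂ / x₂ < y₁ / x₁`.
-/

noncomputable def cpammOut (x y δ : ℝ) : ℝ := y * δ / (x + δ)

lemma cpammOut_pos {x y δ : ℝ} (hx : 0 ≤ x) (hy : 0 < y) (hδ : 0 < δ) : 0 < cpammOut x y δ := by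
  unfold cpammOut
  positivity

lemma cpammOut_cpammOut {x₁ y₁ x₂ y₂ δ : ℝ} (hx₁ : 0 < x₁) (hy₁ : 0 < y₁) (hy₂ : 0 < y₂)
    (hδ : 0 < δ) :
    cpammOut y₂ x₂ (cpammOut x₁ y₁ δ) =
      cpammOut (x₁ * y₂ / (y₁ + y₂)) (x₂ * y₁ / (y₁ + y₂)) δ := by
  have hout := cpammOut_pos hx₁.le hy₁ hδ
  have hx₁δ : x₁ + δ ≠ 0 := by positivity
  have hy₂out : y₂ + cpammOut x₁ y₁ δ ≠ 0 := by positivity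
  have hvirtual : x₁ * y₂ / (y₁ + y₂) + δ ≠ 0 := by positivity
  unfold cpammOut at hy₂out hvirtual ⊢
  field_simp
  ring

lemma lt_cpammOut_iff {x y δ : ℝ} (hδ : 0 < δ) (hxδ : 0 < x + δ) :
    δ < cpammOut x y δ ↔ x + δ < y := by
  rw [cpammOut, lt_div_iff₀ hxδ, mul_comm y, mul_lt_mul_iff_right₀ hδ]

lemma exists_pos_add_lt_iff {a b : ℝ} : (∃ δ : ℝ, 0 < δ ∧ a + δ < b) ↔ a < b := by
  constructor
  · rintro ⟨δ, hδ, hlt⟩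
    linarith
  · intro hab
    obtain ⟨c, hac, hcb⟩ := exists_between hab
    exact ⟨c - a, by linarith, by linarith⟩

/-- Fee-less two-point arbitrage is profitable for some input iff the prices differ. -/
theorem cpamm_arbitrage_profitable_iff
    (x₁ y₁ x₂ y₂ : ℝ) (hx₁ : 0 < x₁) (hy₁ : 0 < y₁) (hx₂ : 0 < x₂) (hy₂ : 0 < y₂) :
    (∃ δ : ℝ, 0 < δ ∧
        x₂ * (y₁ * δ / (x₁ + δ)) / (y₂ + y₁ * δ / (x₁ + δ)) - δ > 0) ↔
      y₁ / x₁ > y₂ / x₂ := by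
  calc (∃ δ : ℝ, 0 < δ ∧ cpammOut y₂ x₂ (cpammOut x₁ y₁ δ) - δ > 0)
      ↔ ∃ δ : ℝ, 0 < δ ∧ x₁ * y₂ / (y₁ + y₂) + δ < x₂ * y₁ / (y₁ + y₂) := by
        refine exists_congr fun δ => and_congr_right fun hδ => ?_
        rw [gt_iff_lt, sub_pos, cpammOut_cpammOut hx₁ hy₁ hy₂ hδ,
          lt_cpammOut_iff hδ (by positivity)]
    _ ↔ x₁ * y₂ / (y₁ + y₂) < x₂ * y₁ / (y₁ + y₂) := exists_pos_add_lt_iff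
    _ ↔ y₁ / x₁ > y₂ / x₂ := by
        rw [div_lt_div_iff_of_pos_right (by positivity), gt_iff_lt, div_lt_div_iff₀ hx₂ hx₁,
          mul_comm x₁, mul_comm x₂]
end

section
/- With a 0.3% fee on each leg, two-point arbitrage between two constant product AMMs with states (x₁, y₁), (x₂, y₂) yields positive profit for some input only if y₂/x₂ < 0.997²·(y₁/x₁), i.e., approximately y₂/x₂ < 0.994·y₁/x₁. -/
/-- With a 0.3% fee on each leg, two-point arbitrage can be profitable only if
x₁·y₂ < 0.997²·x₂·y₁. -/
theorem cpamm_fee_arbitrage_profitability_constraint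
    (x₁ y₁ x₂ y₂ : ℝ) (hx₁ : 0 < x₁) (hy₁ : 0 < y₁) (hx₂ : 0 < x₂) (hy₂ : 0 < y₂)
    (hprofit : ∃ δ : ℝ, 0 < δ ∧
      (x₂ - x₂ * y₂ / (y₂ + 0.997 * (y₁ - x₁ * y₁ / (x₁ + 0.997 * δ)))) - δ > 0) :
    x₁ * y₂ < 0.997 ^ 2 * (x₂ * y₁) := by
  obtain ⟨δ, hδ, hp⟩ := hprofit
  have h1 : (0:ℝ) < x₁ + 0.997 * δ := by linarith
  set dy := y₁ - x₁ * y₁ / (x₁ + 0.997 * δ) with hdy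
  have hdy' : dy = 0.997 * δ * y₁ / (x₁ + 0.997 * δ) := by
    rw [hdy]; field_simp; ring
  have hdypos : 0 < dy := by rw [hdy']; positivity
  have h2 : (0:ℝ) < y₂ + 0.997 * dy := by positivity
  have e : x₂ - x₂ * y₂ / (y₂ + 0.997 * dy) = 0.997 * x₂ * dy / (y₂ + 0.997 * dy) := by
    field_simp; ring
  rw [e] at hp
  have key : δ * (y₂ + 0.997 * dy) < 0.997 * x₂ * dy := by
    have h3 : δ < 0.997 * x₂ * dy / (y₂ + 0.997 * dy) := by linarith
    rw [lt_div_iff₀ h2] at h3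
    linarith
  have hdyeq : dy * (x₁ + 0.997 * δ) = 0.997 * δ * y₁ := by
    rw [hdy']; field_simp
  have key2 : δ * (y₂ + 0.997 * dy) * (x₁ + 0.997 * δ) < 0.997 * x₂ * (0.997 * δ * y₁) := by
    calc δ * (y₂ + 0.997 * dy) * (x₁ + 0.997 * δ)
        < 0.997 * x₂ * dy * (x₁ + 0.997 * δ) := by
          exact mul_lt_mul_of_pos_right key h1
      _ = 0.997 * x₂ * (dy * (x₁ + 0.997 * δ)) := by ring
      _ = 0.997 * x₂ * (0.997 * δ * y₁) := by rw [hdyeq]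
  nlinarith [mul_pos hδ (mul_pos hdypos h1), mul_pos (mul_pos hδ hδ) hy₂,
    mul_pos hδ hy₂]
end

section
/- Swap compression (Theorem 2, special case N = 2): any finite sequence of fee-less swaps (in either direction) on two constant product AMMs taking joint state (x₁, y₁, x₂, y₂) to (x₁', y₁', x₂', y₂') can be realized by at most one net swap per AMM: for each i there is a single swap (SwapXtoY with input x_i' − x_i if x_i' ≥ x_i, or SwapYtoX with input y_i' − y_i otherwise) taking (x_i, y_i) to (x_i', y_i'). -/
/-- One fee-less swap step on a constant product AMM: either a SwapXtoY or a
SwapYtoX with positive input, starting from a positive state. -/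
def CpammStep (s t : ℝ × ℝ) : Prop :=
  (0 < s.1 ∧ 0 < s.2) ∧
    ((∃ δ > 0, t.1 = s.1 + δ ∧ t.2 = s.1 * s.2 / (s.1 + δ)) ∨
     (∃ δ > 0, t.2 = s.2 + δ ∧ t.1 = s.1 * s.2 / (s.2 + δ)))

lemma cpamm_inv {s t : ℝ × ℝ} (h : Relation.ReflTransGen CpammStep s t)
    (hs : 0 < s.1 ∧ 0 < s.2) :
    0 < t.1 ∧ 0 < t.2 ∧ s.1 * s.2 = t.1 * t.2 := by
  induction h with
  | refl => exact ⟨hs.1, hs.2, rfl⟩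
  | tail _ hstep ih =>
    obtain ⟨h1, h2, h3⟩ := ih
    obtain ⟨_, hcase⟩ := hstep
    rcases hcase with ⟨δ, hδ, hx, hy⟩ | ⟨δ, hδ, hy, hx⟩
    all_goals constructor
    · rw [hx]; linarith
    · refine ⟨?_, ?_⟩
      · rw [hy]; positivity
      · rw [hx, hy, h3]; field_simp
    · rw [hx]; positivity
    · refine ⟨?_, ?_⟩
      · rw [hy]; linarith
      · rw [hx, hy, h3]; field_simp

lemma cpamm_single (x y x' y' : ℝ) (hx : 0 < x) (hy : 0 < y)
    (h : Relation.ReflTransGen CpammStep (x, y) (x', y')) :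
    (x ≤ x' → x + (x' - x) = x' ∧ x * y / (x + (x' - x)) = y') ∧
    (x' < x → y + (y' - y) = y' ∧ x * y / (y + (y' - y)) = x') := by
  obtain ⟨hx', hy', hprod⟩ := cpamm_inv h ⟨hx, hy⟩
  simp only at hx' hy' hprod
  constructor
  · intro _
    refine ⟨by ring, ?_⟩
    rw [show x + (x' - x) = x' by ring, hprod]
    field_simp
  · intro _
    refine ⟨by ring, ?_⟩
    rw [show y + (y' - y) = y' by ring, hprod]
    field_simp

/-- Swap compression (N = 2): any finite sequence of fee-less swaps on two
constant product AMMs taking joint state (x₁,y₁,x₂,y₂) to (x₁',y₁',x₂',y₂')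
is realized by at most one net swap per AMM. -/
theorem cpamm_swap_compression
    (x₁ y₁ x₂ y₂ x₁' y₁' x₂' y₂' : ℝ)
    (hx₁ : 0 < x₁) (hy₁ : 0 < y₁) (hx₂ : 0 < x₂) (hy₂ : 0 < y₂)
    (h1 : Relation.ReflTransGen CpammStep (x₁, y₁) (x₁', y₁'))
    (h2 : Relation.ReflTransGen CpammStep (x₂, y₂) (x₂', y₂')) :
    ((x₁ ≤ x₁' → x₁ + (x₁' - x₁) = x₁' ∧ x₁ * y₁ / (x₁ + (x₁' - x₁)) = y₁') ∧
     (x₁' < x₁ → y₁ + (y₁' - y₁) = y₁' ∧ x₁ * y₁ / (y₁ + (y₁' - y₁)) = x₁')) ∧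
    ((x₂ ≤ x₂' → x₂ + (x₂' - x₂) = x₂' ∧ x₂ * y₂ / (x₂ + (x₂' - x₂)) = y₂') ∧
     (x₂' < x₂ → y₂ + (y₂' - y₂) = y₂' ∧ x₂ * y₂ / (y₂ + (y₂' - y₂)) = x₂')) := by
  exact ⟨cpamm_single x₁ y₁ x₁' y₁' hx₁ hy₁ h1, cpamm_single x₂ y₂ x₂' y₂' hx₂ hy₂ h2⟩
end

section
/- Routing strictly improves output when prices differ: for two fee-less constant product AMMs with y₁/x₁ > y₂/x₂ and any trade size δ_x > δ̄ = √(x₁·x₂·y₁/y₂) − x₁, the optimal routed output (first route δ̄ to AMM 1, then split the remainder proportionally to the synchronized liquidities) strictly exceeds the output of sending all δ_x to AMM 1 alone. -/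
/-!
After δ̄ has been sold into AMM 1 its reserves are `(s, (y₂ / x₂) s)` with
`s = √(x₁ x₂ y₁ / y₂)`, so both pools quote the price `p = y₂ / x₂`. Splitting the remainder
`r` in proportion to the reserves of two pools with a common price yields exactly what a single
merged pool `(s + x₂, p (s + x₂))` would pay for `r`, while the single-AMM strategy sells `r`
into the shallower pool `(s, p s)` (constant product swaps are path independent). A deeper pool
with the same price pays strictly more.
-/

noncomputable def cpOut (x y δ : ℝ) : ℝ := y * δ / (x + δ)

section cpOut

variable {x y δ : ℝ}

theorem cpOut_eq_sub_reserve (h : x + δ ≠ 0) : cpOut x y δ = y - x * y / (x + δ) := by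
  unfold cpOut
  field_simp
  ring

theorem cpOut_add {a b : ℝ} (ha : x + a ≠ 0) (hab : x + a + b ≠ 0) :
    cpOut x y (a + b) = cpOut x y a + cpOut (x + a) (x * y / (x + a)) b := by
  unfold cpOut
  rw [← add_assoc]
  field_simp
  ring

theorem cpOut_proportional_split {x₂ r : ℝ} (p : ℝ) (hx : 0 < x) (hx₂ : 0 < x₂) (hr : 0 ≤ r) :
    cpOut x (p * x) (x / (x + x₂) * r) + cpOut x₂ (p * x₂) ((1 - x / (x + x₂)) * r) =
      cpOut (x + x₂) (p * (x + x₂)) r := by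
  have hxx₂ : 0 < x + x₂ := by positivity
  have hcompl : 1 - x / (x + x₂) = x₂ / (x + x₂) := by field_simp; ring
  have : 0 < x + x₂ + r := by positivity
  rw [hcompl]
  unfold cpOut
  field_simp

theorem cpOut_lt_cpOut_of_lt {p x' r : ℝ} (hp : 0 < p) (hx : 0 < x) (hxx' : x < x') (hr : 0 < r) :
    cpOut x (p * x) r < cpOut x' (p * x') r := by
  unfold cpOut
  rw [div_lt_div_iff₀ (by positivity) (by linarith)]
  nlinarith [mul_pos (mul_pos hp hr) (mul_pos hr (sub_pos.2 hxx'))]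

end cpOut

theorem mul_div_sqrt_eq_div_mul_sqrt {x₁ y₁ x₂ y₂ : ℝ} (hx₁ : 0 < x₁) (hy₁ : 0 < y₁) (hx₂ : 0 < x₂)
    (hy₂ : 0 < y₂) :
    x₁ * y₁ / √(x₁ * x₂ * y₁ / y₂) = y₂ / x₂ * √(x₁ * x₂ * y₁ / y₂) := by
  have hq : 0 < x₁ * x₂ * y₁ / y₂ := by positivity
  have hs : 0 < √(x₁ * x₂ * y₁ / y₂) := Real.sqrt_pos.2 hq
  rw [div_eq_iff hs.ne', mul_assoc, Real.mul_self_sqrt hq.le]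
  field_simp

theorem cpamm_routing_beats_single_amm_general
    (x₁ y₁ x₂ y₂ δx : ℝ) (hx₁ : 0 < x₁) (hy₁ : 0 < y₁) (hx₂ : 0 < x₂) (hy₂ : 0 < y₂)
    (hδx : δx > Real.sqrt (x₁ * x₂ * y₁ / y₂) - x₁) :
    let δbar := Real.sqrt (x₁ * x₂ * y₁ / y₂) - x₁
    let x₁' := x₁ + δbar
    let y₁' := x₁ * y₁ / (x₁ + δbar)
    let r := δx - δbar
    let k := x₁' / (x₁' + x₂)
    (y₁ - y₁') + y₁' * (k * r) / (x₁' + k * r) +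
      y₂ * ((1 - k) * r) / (x₂ + (1 - k) * r) >
    y₁ * δx / (x₁ + δx) := by
  intro δbar x₁' y₁' r k
  have hx₁' : 0 < x₁' := by
    simpa [x₁', δbar] using Real.sqrt_pos.2 (by positivity : 0 < x₁ * x₂ * y₁ / y₂)
  have hr : 0 < r := sub_pos.2 hδx
  have hsync : y₁' = y₂ / x₂ * x₁' := by
    simpa [y₁', x₁', δbar] using mul_div_sqrt_eq_div_mul_sqrt hx₁ hy₁ hx₂ hy₂
  have hsingle : y₁ * δx / (x₁ + δx) = cpOut x₁ y₁ δbar + cpOut x₁' y₁' r := by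
    rw [← cpOut_add hx₁'.ne' (by positivity)]
    simp only [cpOut, r, add_sub_cancel]
  have hrouted : (y₁ - y₁') + y₁' * (k * r) / (x₁' + k * r) +
      y₂ * ((1 - k) * r) / (x₂ + (1 - k) * r) =
      cpOut x₁ y₁ δbar + cpOut (x₁' + x₂) (y₂ / x₂ * (x₁' + x₂)) r := by
    rw [cpOut_eq_sub_reserve hx₁'.ne', ← cpOut_proportional_split (y₂ / x₂) hx₁' hx₂ hr.le,
      ← hsync, add_assoc]
    simp only [cpOut, k, y₁', x₁']
    field_simp
  rw [hsingle, hrouted, hsync, gt_iff_lt]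
  gcongr
  exact cpOut_lt_cpOut_of_lt (by positivity) hx₁' (by linarith) hr

/-- Routing strictly improves output when prices differ: for trade sizes beyond
the synchronization threshold δ̄, routing δ̄ to AMM 1 and splitting the remainder
proportionally strictly beats sending everything to AMM 1. -/
theorem cpamm_routing_beats_single_amm
    (x₁ y₁ x₂ y₂ δx : ℝ) (hx₁ : 0 < x₁) (hy₁ : 0 < y₁) (hx₂ : 0 < x₂) (hy₂ : 0 < y₂)
    (hprice : y₁ / x₁ > y₂ / x₂)
    (hδx : δx > Real.sqrt (x₁ * x₂ * y₁ / y₂) - x₁) :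
    let δbar := Real.sqrt (x₁ * x₂ * y₁ / y₂) - x₁
    let x₁' := x₁ + δbar
    let y₁' := x₁ * y₁ / (x₁ + δbar)
    let r := δx - δbar
    let k := x₁' / (x₁' + x₂)
    (y₁ - y₁') + y₁' * (k * r) / (x₁' + k * r) +
      y₂ * ((1 - k) * r) / (x₂ + (1 - k) * r) >
    y₁ * δx / (x₁ + δx) :=
  cpamm_routing_beats_single_amm_general x₁ y₁ x₂ y₂ δx hx₁ hy₁ hx₂ hy₂ hδx
end
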